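/- arXiv:2001.10751 — 5 statements merged into one kernel-verified Lean document; each statement's English description precedes it below -/
import Mathlib

section
/- Let V be a finite type with n = |V| elements, adj : V → V → Prop a directed edge relation, L a natural number, and p : {0,1,…,L} → V a directed path, i.e., adj (p j) (p (j+1)) for every j < L. Let d̂ : V → ℤ, let F : V → Finset V, let H ⊆ V be a set of 'heavy' vertices, and let c ≥ 1 and m ≥ 1 be integers. Assume: (a) for every j < L with p j ∉ H, d̂(p (j+1)) ≤ d̂(p j) + 1; (b) for every j < L, either p (j+1) ∈ F(p j) or d̂(p (j+1)) ≤ d̂(p j) + 1; (c) for all u, v with v ∈ F(u), |d̂(v) − d̂(u)| ≤ c; (d) for every u ∈ H, m ≤ |F(u)|. Then m · (d̂(p L) − d̂(p 0) − L) ≤ 3·c·n. -/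
/-!
Track the excess `d̂ x - d̂ (p 0) - k` of the path vertex at position `k`. It can only rise
along an edge `u → v` with `u` heavy and `v ∈ F u`, and then by less than `c`. Walking along
the path, each time the excess first climbs above `3 c t` the current vertex is heavy and its
forward neighborhood lies more than `2 c` higher (in excess) than all neighborhoods collected
before, so it is disjoint from them. Hence `t` crossings yield `t` disjoint sets of size at
least `m`, i.e. `m t ≤ n`, and the final excess is at most `3 c t`.
-/

open Finset

section

variable {V : Type*} (d : V → ℤ) (c m : ℤ)

/-- `U` is the union of the `t` disjoint forward neighborhoods collected so far. -/
def ExcessPacking (base k : ℤ) (u : V) : Prop :=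
  ∃ t : ℕ, ∃ U : Finset V, m * t ≤ #U ∧ d u - base - k ≤ 3 * c * t ∧
    ∀ w ∈ U, d w - base - k ≤ 3 * c * t - 2 * c

variable {d c m}

lemma excessPacking_start (u : V) : ExcessPacking d c m (d u) 0 u :=
  ⟨0, ∅, by simp, by simp, by simp⟩

lemma ExcessPacking.succ [DecidableEq V] {F : Finset V} {base k : ℤ} {u v : V}
    (h : ExcessPacking d c m base k u) (hclose : ∀ w ∈ F, |d w - d u| ≤ c)
    (hstep : d v ≤ d u + 1 ∨ v ∈ F ∧ m ≤ #F) :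
    ExcessPacking d c m base (k + 1) v := by
  obtain ⟨t, U, hU, hu, hUlow⟩ := h
  by_cases hkeep : d v - base - (k + 1) ≤ 3 * c * t
  · exact ⟨t, U, hU, hkeep, fun w hw => by linarith [hUlow w hw]⟩
  obtain ⟨hvF, hmF⟩ : v ∈ F ∧ m ≤ #F := hstep.resolve_left fun h => hkeep (by linarith)
  have hv := abs_le.mp (hclose v hvF)
  have hdisj : Disjoint U F := disjoint_left.mpr fun w hwU hwF => by
    linarith [hUlow w hwU, abs_le.mp (hclose w hwF)]
  refine ⟨t + 1, U ∪ F, ?_, ?_, fun w hw => ?_⟩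
  · rw [card_union_of_disjoint hdisj]
    push_cast
    linarith
  · push_cast
    linarith
  · push_cast
    rcases mem_union.mp hw with hwU | hwF
    · linarith [hUlow w hwU]
    · linarith [abs_le.mp (hclose w hwF)]

lemma ExcessPacking.mul_excess_le [Fintype V] {base k : ℤ} {u : V}
    (h : ExcessPacking d c m base k u) (hc : 0 ≤ c) (hm : 0 ≤ m) :
    m * (d u - base - k) ≤ 3 * c * Fintype.card V := by
  obtain ⟨t, U, hU, hu, -⟩ := h
  calc m * (d u - base - k) ≤ m * (3 * c * t) := mul_le_mul_of_nonneg_left hu hm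
    _ = 3 * c * (m * t) := by ring
    _ ≤ 3 * c * #U := mul_le_mul_of_nonneg_left hU (by positivity)
    _ ≤ 3 * c * Fintype.card V := by gcongr; exact_mod_cast card_le_univ U

end

theorem heavy_light_error_bound_general {V : Type*} [Fintype V] (n : ℕ) (hn : n = Fintype.card V)
    (L : ℕ) (p : Fin (L + 1) → V)
    (dhat : V → ℤ) (F : V → Finset V) (H : Set V) (c m : ℤ) (hc : 1 ≤ c) (hm : 1 ≤ m)
    (hlight : ∀ j : Fin L, p j.castSucc ∉ H → dhat (p j.succ) ≤ dhat (p j.castSucc) + 1)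
    (hedge : ∀ j : Fin L, p j.succ ∈ F (p j.castSucc) ∨ dhat (p j.succ) ≤ dhat (p j.castSucc) + 1)
    (hclose : ∀ u v : V, v ∈ F u → |dhat v - dhat u| ≤ c)
    (hheavy : ∀ u ∈ H, m ≤ ((F u).card : ℤ)) :
    m * (dhat (p (Fin.last L)) - dhat (p 0) - (L : ℤ)) ≤ 3 * c * (n : ℤ) := by
  classical
  have hpack : ∀ i : Fin (L + 1), ExcessPacking dhat c m (dhat (p 0)) (i : ℕ) (p i) := by
    refine Fin.induction (excessPacking_start _) fun j ih => ?_
    have hstep : dhat (p j.succ) ≤ dhat (p j.castSucc) + 1 ∨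
        p j.succ ∈ F (p j.castSucc) ∧ m ≤ #(F (p j.castSucc)) := by
      by_cases hH : p j.castSucc ∈ H
      · exact (hedge j).symm.imp_right fun hF => ⟨hF, hheavy _ hH⟩
      · exact Or.inl (hlight j hH)
    simpa using ih.succ (hclose _) hstep
  simpa [hn] using (hpack (Fin.last L)).mul_excess_le (by linarith) (by linarith)

/-- Along a directed path `p` with `L` edges, if light vertices (those outside
`H`) contribute no error, every vertex's forward neighborhood has estimates
within `c`, every path edge either goes into the tail's forward neighborhood or
contributes no error, and every heavy vertex has forward neighborhood of size
at least `m`, then `m * (d̂(p L) − d̂(p 0) − L) ≤ 3 * c * n`. -/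
theorem heavy_light_error_bound {V : Type*} [Fintype V] (n : ℕ) (hn : n = Fintype.card V)
    (adj : V → V → Prop) (L : ℕ) (p : Fin (L + 1) → V)
    (hpath : ∀ j : Fin L, adj (p j.castSucc) (p j.succ))
    (dhat : V → ℤ) (F : V → Finset V) (H : Set V) (c m : ℤ) (hc : 1 ≤ c) (hm : 1 ≤ m)
    (hlight : ∀ j : Fin L, p j.castSucc ∉ H → dhat (p j.succ) ≤ dhat (p j.castSucc) + 1)
    (hedge : ∀ j : Fin L, p j.succ ∈ F (p j.castSucc) ∨ dhat (p j.succ) ≤ dhat (p j.castSucc) + 1)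
    (hclose : ∀ u v : V, v ∈ F u → |dhat v - dhat u| ≤ c)
    (hheavy : ∀ u ∈ H, m ≤ ((F u).card : ℤ)) :
    m * (dhat (p (Fin.last L)) - dhat (p 0) - (L : ℤ)) ≤ 3 * c * (n : ℤ) :=
  heavy_light_error_bound_general n hn L p dhat F H c m hc hm hlight hedge hclose hheavy
end

section
/- Let V be a finite type with n = |V| ≥ 2 elements, adj : V → V → Prop a directed edge relation, L a natural number, and p : {0,1,…,L} → V a directed path, i.e., adj (p j) (p (j+1)) for every j < L. Let d̂ : V → ℤ, let h : V → ℕ be a heaviness assignment with 2^{h(u)} ≤ n for all u, let F : V → Finset V, and let ε, τ > 0 be real numbers. Assume: (i) for all u, v with v ∈ F(u), |d̂(v) − d̂(u)| ≤ 2^{h(u)}; (ii) for every u, (2^{h(u)} − 1) · 6 · n · log₂ n / (ε·τ) ≤ |F(u)|; (iii) for every j < L, either p (j+1) ∈ F(p j) or d̂(p (j+1)) ≤ d̂(p j) + 1; (iv) for every j < L with h(p j) = 0, d̂(p (j+1)) ≤ d̂(p j) + 1. Then d̂(p L) ≤ d̂(p 0) + L + ε·τ. -/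
/-!
Follow the running maximum `M j = max_{i ≤ j} d̂(q i)` along the path: `d̂(q L) - d̂(q 0) ≤ M L - M 0`,
and `M` grows by at most one on every step except the jumps `d̂(q (j+1)) > d̂(q j) + 1`. A jump leaves
a vertex of heaviness `h ≥ 1` into its forward neighbourhood, so for every `w ∈ F(q j)` the window
`(M j, M (j+1)]` lies in `(d̂ w - 2^h, d̂ w + 2^(h+1)]`. Windows of distinct steps are disjoint, so
counting pairs (window point, neighbour) bounds the total growth of `M` over the level-`h` jumps by
`3·2^h·n / |F| ≤ ετ / log₂ n`, and there are at most `log₂ n` levels.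
-/

open Finset

section DisjointIntervals

variable {M : ℕ → ℤ}

theorem Monotone.sum_sub_le_of_Ioc_subset (hM : Monotone M) {S : Finset ℕ} {a : ℤ} {k : ℕ}
    (hS : ∀ j ∈ S, Ioc (M j) (M (j + 1)) ⊆ Ioc a (a + k)) :
    ∑ j ∈ S, (M (j + 1) - M j) ≤ k := by
  have hdisj : (S : Set ℕ).PairwiseDisjoint fun j => Ioc (M j) (M (j + 1)) := by
    intro i _ j _ hij
    rw [Function.onFun, ← disjoint_coe, coe_Ioc, coe_Ioc]
    exact hM.pairwise_disjoint_on_Ioc_succ hij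
  calc ∑ j ∈ S, (M (j + 1) - M j) = #(S.biUnion fun j => Ioc (M j) (M (j + 1))) := by
        rw [card_biUnion hdisj]
        push_cast
        refine sum_congr rfl fun j _ => ?_
        rw [Int.card_Ioc, Int.toNat_of_nonneg (sub_nonneg.2 (hM j.le_succ))]
    _ ≤ #(Ioc a (a + k)) := by exact_mod_cast card_le_card (biUnion_subset.2 hS)
    _ = k := by simp

theorem Monotone.sum_sub_mul_card_le {V : Type*} [Fintype V] (hM : Monotone M) {S : Finset ℕ}
    {G : ℕ → Finset V} {f : V → ℤ} {k : ℕ}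
    (hS : ∀ j ∈ S, ∀ w ∈ G j, Ioc (M j) (M (j + 1)) ⊆ Ioc (f w) (f w + k)) :
    ∑ j ∈ S, (M (j + 1) - M j) * #(G j) ≤ Fintype.card V * k := by
  classical
  calc ∑ j ∈ S, (M (j + 1) - M j) * #(G j) = ∑ j ∈ S, ∑ _w ∈ G j, (M (j + 1) - M j) := by
        simp only [sum_const, nsmul_eq_mul, mul_comm]
    _ = ∑ w, ∑ j ∈ S with w ∈ G j, (M (j + 1) - M j) :=
        sum_comm' fun j w => by simp
    _ ≤ ∑ _w : V, (k : ℤ) :=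
        sum_le_sum fun w _ => hM.sum_sub_le_of_Ioc_subset fun j hj =>
          hS j (mem_filter.1 hj).1 w (mem_filter.1 hj).2
    _ = Fintype.card V * k := by simp

end DisjointIntervals

section RunningMax

variable (a : ℕ → ℤ) {j : ℕ}

theorem partialSups_add_one_le_add {c : ℤ} (hc : 0 ≤ c) (h : a (j + 1) ≤ a j + c) :
    partialSups a (j + 1) ≤ partialSups a j + c := by
  rw [partialSups_add_one]
  exact sup_le (le_add_of_nonneg_right hc) (h.trans (add_le_add_left (le_partialSups a j) c))

theorem Ioc_partialSups_subset {x c : ℤ} (hx : |x - a j| ≤ c) (h : a (j + 1) ≤ a j + c) :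
    Ioc (partialSups a j) (partialSups a (j + 1)) ⊆ Ioc (x - c) (x - c + 3 * c) := by
  intro t ht
  rw [mem_Ioc, partialSups_add_one, le_sup_iff] at ht
  have : a j ≤ partialSups a j := le_partialSups a j
  rw [abs_le] at hx
  rw [mem_Ioc]
  omega

end RunningMax

section LazyES

variable {V : Type*} (dhat : V → ℤ) (q : ℕ → V) (L : ℕ)

def jumpSteps : Finset ℕ := {j ∈ range L | dhat (q j) + 1 < dhat (q (j + 1))}

local notation "M" => partialSups (dhat ∘ q)

theorem sub_le_sum_jumpSteps_add :
    dhat (q L) - dhat (q 0) ≤ ∑ j ∈ jumpSteps dhat q L, (M (j + 1) - M j) + L := by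
  have hL : dhat (q L) ≤ M L := le_partialSups (dhat ∘ q) L
  have h0 : M 0 = dhat (q 0) := partialSups_zero _
  have hstep : ∀ j, ¬ dhat (q j) + 1 < dhat (q (j + 1)) → M (j + 1) - M j ≤ 1 := fun j hj => by
    have := partialSups_add_one_le_add (dhat ∘ q) zero_le_one (not_lt.1 hj)
    omega
  calc dhat (q L) - dhat (q 0) ≤ M L - M 0 := by omega
    _ = ∑ j ∈ range L, (M (j + 1) - M j) := (sum_range_sub _ _).symm
    _ = ∑ j ∈ jumpSteps dhat q L, (M (j + 1) - M j)
          + ∑ j ∈ range L with ¬ dhat (q j) + 1 < dhat (q (j + 1)), (M (j + 1) - M j) :=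
        (sum_filter_add_sum_filter_not _ _ _).symm
    _ ≤ ∑ j ∈ jumpSteps dhat q L, (M (j + 1) - M j) + L := by
        gcongr
        calc _ ≤ ∑ j ∈ range L with ¬ dhat (q j) + 1 < dhat (q (j + 1)), (1 : ℤ) :=
              sum_le_sum fun j hj => hstep j (mem_filter.1 hj).2
          _ ≤ L := by simpa using card_filter_le (range L) _

variable [Fintype V] (h : V → ℕ) (F : V → Finset V) (n : ℕ) {ε τ : ℝ}

theorem sum_jumpSteps_level_le (hετ : 0 < ε * τ) (hV : Fintype.card V ≤ n)
    (hclose : ∀ u v : V, v ∈ F u → |dhat v - dhat u| ≤ 2 ^ h u)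
    (hsize : ∀ u : V, ((2 : ℝ) ^ h u - 1) * 6 * n * Real.logb 2 n / (ε * τ) ≤ #(F u))
    (hedge : ∀ j < L, q (j + 1) ∈ F (q j) ∨ dhat (q (j + 1)) ≤ dhat (q j) + 1)
    {h₀ : ℕ} (hh₀ : h₀ ∈ Icc 1 (Nat.log 2 n)) :
    ∑ j ∈ jumpSteps dhat q L with h (q j) = h₀, ((M (j + 1) - M j : ℤ) : ℝ)
      ≤ ε * τ / Real.logb 2 n := by
  obtain ⟨h₀_pos, h₀_le⟩ := mem_Icc.1 hh₀
  set S := {j ∈ jumpSteps dhat q L | h (q j) = h₀}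
  have hS : ∀ j ∈ S, q (j + 1) ∈ F (q j) ∧ h (q j) = h₀ := by
    intro j hj
    obtain ⟨hjump, hlevel⟩ := mem_filter.1 hj
    obtain ⟨hjL, hlt⟩ := mem_filter.1 hjump
    exact ⟨(hedge j (mem_range.1 hjL)).resolve_right (not_le.2 hlt), hlevel⟩
  have hwin : ∀ j ∈ S, ∀ w ∈ F (q j), Ioc (M j) (M (j + 1)) ⊆
      Ioc (dhat w - 2 ^ h₀) (dhat w - 2 ^ h₀ + ((3 * 2 ^ h₀ : ℕ) : ℤ)) := by
    intro j hj w hw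
    obtain ⟨hnext, hlevel⟩ := hS j hj
    have hstep := (abs_le.1 (hclose _ _ hnext)).2
    rw [hlevel] at hstep
    push_cast
    exact Ioc_partialSups_subset (dhat ∘ q) (hlevel ▸ hclose _ _ hw) (by simp only [Function.comp_apply]; linarith)
  have hcount := (partialSups_monotone (dhat ∘ q)).sum_sub_mul_card_le hwin
  have hd : ∀ j, (0 : ℝ) ≤ ((M (j + 1) - M j : ℤ) : ℝ) := fun j =>
    Int.cast_nonneg (sub_nonneg.2 (partialSups_monotone _ j.le_succ))
  have hn : 2 ≤ n := (Nat.log_pos_iff.1 (by omega : 0 < Nat.log 2 n)).1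
  have hlog : 0 < Real.logb 2 n := Real.logb_pos one_lt_two (by exact_mod_cast hn)
  have hc : (2 : ℝ) ≤ 2 ^ h₀ := le_self_pow₀ one_le_two (by omega)
  set s := ((2 : ℝ) ^ h₀ - 1) * 6 * n * Real.logb 2 n / (ε * τ)
  have hs : 0 < s := by
    have : (0 : ℝ) < n := by exact_mod_cast hn.trans_lt' two_pos
    have : (0 : ℝ) < 2 ^ h₀ - 1 := by linarith
    positivity
  refine le_of_mul_le_mul_right ?_ hs
  calc (∑ j ∈ S, ((M (j + 1) - M j : ℤ) : ℝ)) * s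
      ≤ ∑ j ∈ S, ((M (j + 1) - M j : ℤ) : ℝ) * #(F (q j)) := by
        rw [sum_mul]
        refine sum_le_sum fun j hj => mul_le_mul_of_nonneg_left ?_ (hd j)
        simpa [(hS j hj).2] using hsize (q j)
    _ ≤ Fintype.card V * (3 * 2 ^ h₀) := by exact_mod_cast hcount
    _ ≤ n * (3 * 2 ^ h₀) := by gcongr
    _ ≤ ((2 : ℝ) ^ h₀ - 1) * 6 * n := by nlinarith
    _ = ε * τ / Real.logb 2 n * s := by
        simp only [s]
        field_simp
        rw [mul_assoc _ ε τ, mul_div_cancel_right₀ _ hετ.ne']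

theorem sum_jumpSteps_le (hετ : 0 < ε * τ) (hV : Fintype.card V ≤ n)
    (hh : ∀ u : V, 2 ^ h u ≤ n)
    (hclose : ∀ u v : V, v ∈ F u → |dhat v - dhat u| ≤ 2 ^ h u)
    (hsize : ∀ u : V, ((2 : ℝ) ^ h u - 1) * 6 * n * Real.logb 2 n / (ε * τ) ≤ #(F u))
    (hedge : ∀ j < L, q (j + 1) ∈ F (q j) ∨ dhat (q (j + 1)) ≤ dhat (q j) + 1)
    (hlight : ∀ j < L, h (q j) = 0 → dhat (q (j + 1)) ≤ dhat (q j) + 1) :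
    ∑ j ∈ jumpSteps dhat q L, ((M (j + 1) - M j : ℤ) : ℝ) ≤ ε * τ := by
  have hlevel : ∀ j ∈ jumpSteps dhat q L, h (q j) ∈ Icc 1 (Nat.log 2 n) := by
    intro j hj
    obtain ⟨hjL, hlt⟩ := mem_filter.1 hj
    refine mem_Icc.2 ⟨Nat.one_le_iff_ne_zero.2 fun h0 => ?_, Nat.le_log_of_pow_le one_lt_two (hh _)⟩
    exact (hlight j (mem_range.1 hjL) h0).not_gt hlt
  have hlog : (Nat.log 2 n : ℝ) ≤ Real.logb 2 n := Real.natLog_le_logb n 2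
  calc ∑ j ∈ jumpSteps dhat q L, ((M (j + 1) - M j : ℤ) : ℝ)
      = ∑ h₀ ∈ Icc 1 (Nat.log 2 n),
          ∑ j ∈ jumpSteps dhat q L with h (q j) = h₀, ((M (j + 1) - M j : ℤ) : ℝ) :=
        (sum_fiberwise_of_maps_to hlevel _).symm
    _ ≤ ∑ _h₀ ∈ Icc 1 (Nat.log 2 n), ε * τ / Real.logb 2 n :=
        sum_le_sum fun _ hh₀ => sum_jumpSteps_level_le dhat q L h F n hετ hV hclose hsize hedge hh₀
    _ = ε * τ * (Nat.log 2 n / Real.logb 2 n) := by simp [mul_div_left_comm]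
    _ ≤ ε * τ := mul_le_of_le_one_right hετ.le
        (div_le_one_of_le₀ hlog ((Nat.cast_nonneg _).trans hlog))

theorem dhat_le_dhat_zero_add (hετ : 0 < ε * τ) (hV : Fintype.card V ≤ n)
    (hh : ∀ u : V, 2 ^ h u ≤ n)
    (hclose : ∀ u v : V, v ∈ F u → |dhat v - dhat u| ≤ 2 ^ h u)
    (hsize : ∀ u : V, ((2 : ℝ) ^ h u - 1) * 6 * n * Real.logb 2 n / (ε * τ) ≤ #(F u))
    (hedge : ∀ j < L, q (j + 1) ∈ F (q j) ∨ dhat (q (j + 1)) ≤ dhat (q j) + 1)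
    (hlight : ∀ j < L, h (q j) = 0 → dhat (q (j + 1)) ≤ dhat (q j) + 1) :
    (dhat (q L) : ℝ) ≤ dhat (q 0) + L + ε * τ := by
  have hjumps := sum_jumpSteps_le dhat q L h F n hετ hV hh hclose hsize hedge hlight
  have hsteps : ((dhat (q L) - dhat (q 0) : ℤ) : ℝ)
      ≤ ((∑ j ∈ jumpSteps dhat q L, (M (j + 1) - M j) + L : ℤ) : ℝ) := by
    exact_mod_cast sub_le_sum_jumpSteps_add dhat q L
  push_cast at hsteps hjumps
  linarith

end LazyES

theorem lazy_es_tree_error_bound_general {V : Type*} [Fintype V] (n : ℕ) (hn : n = Fintype.card V)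
    (L : ℕ) (p : Fin (L + 1) → V)
    (dhat : V → ℤ) (h : V → ℕ) (hh : ∀ u : V, 2 ^ h u ≤ n) (F : V → Finset V)
    (ε τ : ℝ) (hε : 0 < ε) (hτ : 0 < τ)
    (hclose : ∀ u v : V, v ∈ F u → |dhat v - dhat u| ≤ 2 ^ h u)
    (hsize : ∀ u : V, ((2 : ℝ) ^ h u - 1) * 6 * n * Real.logb 2 n / (ε * τ) ≤ (F u).card)
    (hedge : ∀ j : Fin L, p j.succ ∈ F (p j.castSucc) ∨ dhat (p j.succ) ≤ dhat (p j.castSucc) + 1)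
    (hlight : ∀ j : Fin L, h (p j.castSucc) = 0 → dhat (p j.succ) ≤ dhat (p j.castSucc) + 1) :
    (dhat (p (Fin.last L)) : ℝ) ≤ (dhat (p 0) : ℝ) + L + ε * τ := by
  have hcast : ∀ j (hj : j < L), Fin.clamp j L = (⟨j, hj⟩ : Fin L).castSucc ∧
      Fin.clamp (j + 1) L = (⟨j, hj⟩ : Fin L).succ := fun j hj =>
    ⟨Fin.ext (by simp [hj.le]), Fin.ext (by simp [Nat.succ_le_of_lt hj])⟩
  have hbound := dhat_le_dhat_zero_add dhat (fun j => p (Fin.clamp j L)) L h F n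
    (mul_pos hε hτ) hn.ge hh hclose hsize
    (fun j hj => by simpa only [(hcast j hj).1, (hcast j hj).2] using hedge ⟨j, hj⟩)
    (fun j hj => by simpa only [(hcast j hj).1, (hcast j hj).2] using hlight ⟨j, hj⟩)
  have h0 : Fin.clamp 0 L = 0 := Fin.ext (by simp)
  have hL : Fin.clamp L L = Fin.last L := Fin.ext (by simp)
  simpa only [h0, hL] using hbound

/-- Abstract correctness of the lazy ES-tree (Lemma `lem:correct`): along a
directed path `p` with `L` edges, if estimates in forward neighborhoods are
within `2^{h(u)}` of their owner's, each vertex `u` has forward neighborhood of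
size at least `(2^{h(u)} − 1)·6·n·log₂ n/(ε·τ)`, each path edge either goes
into the tail's forward neighborhood or contributes no error, and tails of
heaviness `0` contribute no error, then `d̂(p L) ≤ d̂(p 0) + L + ε·τ`. -/
theorem lazy_es_tree_error_bound {V : Type*} [Fintype V] (n : ℕ) (hn : n = Fintype.card V)
    (hn2 : 2 ≤ n) (adj : V → V → Prop) (L : ℕ) (p : Fin (L + 1) → V)
    (hpath : ∀ j : Fin L, adj (p j.castSucc) (p j.succ))
    (dhat : V → ℤ) (h : V → ℕ) (hh : ∀ u : V, 2 ^ h u ≤ n) (F : V → Finset V)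
    (ε τ : ℝ) (hε : 0 < ε) (hτ : 0 < τ)
    (hclose : ∀ u v : V, v ∈ F u → |dhat v - dhat u| ≤ 2 ^ h u)
    (hsize : ∀ u : V, ((2 : ℝ) ^ h u - 1) * 6 * n * Real.logb 2 n / (ε * τ) ≤ (F u).card)
    (hedge : ∀ j : Fin L, p j.succ ∈ F (p j.castSucc) ∨ dhat (p j.succ) ≤ dhat (p j.castSucc) + 1)
    (hlight : ∀ j : Fin L, h (p j.castSucc) = 0 → dhat (p j.succ) ≤ dhat (p j.castSucc) + 1) :
    (dhat (p (Fin.last L)) : ℝ) ≤ (dhat (p 0) : ℝ) + L + ε * τ :=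
  lazy_es_tree_error_bound_general n hn L p dhat h hh F ε τ hε hτ hclose hsize hedge hlight
end

section
/- Let k ≥ 3, let G be a simple graph on a vertex type V, let c : V → Fin k be a coloring of the vertices, and let H be the layered graph of the k-cycle reduction: the vertex set of H is {0,1,…,k} × V, and (i,x) is adjacent to (j,y) in H if and only if (up to symmetry) j = i+1, G.Adj x y, c(x) = i mod k and c(y) = j mod k. Then for every vertex v with c(v) = 0: (a) the extended distance in H (valued in ℕ∞, with ∞ for unreachable pairs) from (0,v) to (k,v) is at least k; and (b) this extended distance equals k if and only if there exist vertices x₀ = v, x₁, …, x_{k−1} of G with c(x_i) = i for every i, G.Adj x_i x_{i+1} for every i < k−1, and G.Adj x_{k−1} x₀ — that is, if and only if G contains a k-cycle through v whose i-th vertex lies in the i-th color class. -/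
open SimpleGraph

lemma walk_of_chain {α : Type*} (H : SimpleGraph α) (f : ℕ → α) :
    ∀ n, (∀ i < n, H.Adj (f i) (f (i + 1))) →
      ∃ p : H.Walk (f 0) (f n), p.length = n := by
  intro n
  induction n with
  | zero => exact fun _ => ⟨SimpleGraph.Walk.nil, rfl⟩
  | succ n ih =>
    intro h
    obtain ⟨p, hp⟩ := ih (fun i hi => h i (by omega))
    exact ⟨p.concat (h n (by omega)), by simp [SimpleGraph.Walk.length_concat, hp]⟩

/-- Distances in the layered graph of the `k`-cycle reduction: the layered
graph `H` on `{0,…,k} × V` has an edge between `(i,x)` and `(j,y)` (up to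
symmetry) iff `j = i+1`, `x ~ y` in `G`, `c x = i mod k` and `c y = j mod k`.
For every vertex `v` of color `0`, the extended distance from `(0,v)` to
`(k,v)` is at least `k`, with equality iff `G` contains a `k`-cycle through `v`
whose `i`-th vertex lies in the `i`-th color class. -/
theorem layered_graph_kCycle_distance {V : Type*} (k : ℕ) (hk : 3 ≤ k)
    (G : SimpleGraph V) (c : V → Fin k) (H : SimpleGraph (Fin (k + 1) × V))
    (hH : H = SimpleGraph.fromRel (fun x y =>
      (y.1 : ℕ) = (x.1 : ℕ) + 1 ∧ G.Adj x.2 y.2 ∧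
        ((c x.2 : ℕ) = (x.1 : ℕ) % k) ∧ ((c y.2 : ℕ) = (y.1 : ℕ) % k)))
    (v : V) (hv : (c v : ℕ) = 0) :
    ((k : ℕ∞) ≤ H.edist (⟨0, by omega⟩, v) (⟨k, by omega⟩, v)) ∧
      (H.edist (⟨0, by omega⟩, v) (⟨k, by omega⟩, v) = (k : ℕ∞) ↔
        ∃ x : ℕ → V, x 0 = v ∧ (∀ i < k, ((c (x i) : ℕ) = i)) ∧
          (∀ i, i + 1 < k → G.Adj (x i) (x (i + 1))) ∧ G.Adj (x (k - 1)) (x 0)) := by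
  set R : Fin (k+1) × V → Fin (k+1) × V → Prop := fun x y =>
      (y.1 : ℕ) = (x.1 : ℕ) + 1 ∧ G.Adj x.2 y.2 ∧
        ((c x.2 : ℕ) = (x.1 : ℕ) % k) ∧ ((c y.2 : ℕ) = (y.1 : ℕ) % k) with hR
  have hAdjIff : ∀ p q : Fin (k+1) × V, H.Adj p q ↔ p ≠ q ∧ (R p q ∨ R q p) := by
    rw [hH]; exact fun p q => SimpleGraph.fromRel_adj R p q
  set a : Fin (k+1) × V := (⟨0, by omega⟩, v) with ha
  set b : Fin (k+1) × V := (⟨k, by omega⟩, v) with hb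
  have hka : (a.1 : ℕ) = 0 := rfl
  have hkb : (b.1 : ℕ) = k := rfl
  -- every edge of H changes the layer by exactly one
  have hstep : ∀ {p q : Fin (k+1) × V}, H.Adj p q →
      (((q.1 : ℕ) : ℤ) = (p.1 : ℕ) + 1 ∨ ((p.1 : ℕ) : ℤ) = (q.1 : ℕ) + 1) ∧ G.Adj p.2 q.2 := by
    intro p q hadj
    obtain ⟨-, h | h⟩ := (hAdjIff p q).mp hadj
    · exact ⟨Or.inl (by exact_mod_cast h.1), h.2.1⟩
    · exact ⟨Or.inr (by exact_mod_cast h.1), h.2.1.symm⟩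
  -- layer change along a walk is at most its length
  have hlow : ∀ {u w : Fin (k+1) × V} (p : H.Walk u w),
      ((w.1 : ℕ) : ℤ) ≤ ((u.1 : ℕ) : ℤ) + p.length := by
    intro u w p
    induction p with
    | nil => simp
    | cons h p ih =>
      obtain ⟨h1 | h1, -⟩ := hstep h <;>
        · simp only [SimpleGraph.Walk.length_cons] at *
          push_cast at *
          omega
  have lower : (k : ℕ∞) ≤ H.edist a b := by
    rw [SimpleGraph.edist_eq_sInf]
    refine le_sInf ?_
    rintro y ⟨p, rfl⟩
    have h1 := hlow p
    rw [hka, hkb] at h1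
    show (k : ℕ∞) ≤ (p.length : ℕ∞)
    exact_mod_cast (by omega : k ≤ p.length)
  refine ⟨lower, ?_, ?_⟩
  · -- forward direction
    intro heq
    obtain ⟨p, hp⟩ := SimpleGraph.exists_walk_of_edist_ne_top (u := a) (v := b)
      (by rw [heq]; exact (ENat.coe_lt_top k).ne)
    rw [heq] at hp
    have hplen : p.length = k := by exact_mod_cast hp
    have hgvk : p.getVert k = b := by
      have h1 := p.getVert_length
      rwa [hplen] at h1
    have hadjstep : ∀ i < k, H.Adj (p.getVert i) (p.getVert (i+1)) := fun i hi =>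
      p.adj_getVert_succ (by omega)
    have hf01 : ∀ i < k, (((p.getVert (i+1)).1 : ℕ) : ℤ) = ((p.getVert i).1 : ℕ) + 1 ∨
        (((p.getVert i).1 : ℕ) : ℤ) = ((p.getVert (i+1)).1 : ℕ) + 1 := fun i hi =>
      (hstep (hadjstep i hi)).1
    have hup : ∀ d i, i + d ≤ k →
        (((p.getVert (i + d)).1 : ℕ) : ℤ) ≤ ((p.getVert i).1 : ℕ) + d ∧
        (((p.getVert i).1 : ℕ) : ℤ) ≤ ((p.getVert (i + d)).1 : ℕ) + d := by
      intro d
      induction d with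
      | zero => simp
      | succ d ih =>
        intro i hi
        obtain ⟨h1, h2⟩ := ih i (by omega)
        have h3 := hf01 (i + d) (by omega)
        have he : i + (d + 1) = i + d + 1 := by ring
        rw [he]
        push_cast
        omega
    have hf0 : ((p.getVert 0).1 : ℕ) = 0 := by rw [p.getVert_zero]
    have hfk : ((p.getVert k).1 : ℕ) = k := by rw [hgvk]
    have hlayer : ∀ i ≤ k, ((p.getVert i).1 : ℕ) = i := by
      intro i hi
      have h1 := (hup i 0 (by omega)).1
      have h2 := (hup (k - i) i (by omega)).1
      rw [(by omega : i + (k - i) = k)] at h2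
      simp only [zero_add] at h1
      rw [hf0] at h1
      rw [hfk] at h2
      have hc : ((k - i : ℕ) : ℤ) = (k : ℤ) - i := by
        have := Nat.cast_sub hi (R := ℤ); omega
      omega
    -- the relation holds in the forward direction at each step
    have hfwd : ∀ i < k, G.Adj ((p.getVert i).2) ((p.getVert (i+1)).2) ∧
        ((c (p.getVert i).2 : ℕ) = i % k) ∧ ((c (p.getVert (i+1)).2 : ℕ) = (i+1) % k) := by
      intro i hi
      have hli : ((p.getVert i).1 : ℕ) = i := hlayer i (by omega)
      have hli1 : ((p.getVert (i+1)).1 : ℕ) = i + 1 := hlayer (i+1) (by omega)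
      obtain ⟨-, h | h⟩ := (hAdjIff _ _).mp (hadjstep i hi)
      · obtain ⟨h1, h2, h3, h4⟩ := h
        rw [hli] at h3
        rw [hli1] at h4
        exact ⟨h2, h3, h4⟩
      · exfalso
        have h1 := h.1
        rw [hli, hli1] at h1
        omega
    refine ⟨fun i => (p.getVert i).2, ?_, ?_, ?_, ?_⟩
    · show (p.getVert 0).2 = v
      rw [p.getVert_zero]
    · intro i hi
      show (c (p.getVert i).2 : ℕ) = i
      rw [(hfwd i hi).2.1, Nat.mod_eq_of_lt hi]
    · intro i hi
      exact (hfwd i (by omega)).1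
    · show G.Adj (p.getVert (k-1)).2 (p.getVert 0).2
      have h := (hfwd (k-1) (by omega)).1
      rw [(by omega : k - 1 + 1 = k), hgvk] at h
      rw [p.getVert_zero]
      exact h
  · -- reverse direction
    rintro ⟨x, hx0, hcol, hadj, hcyc⟩
    set g : ℕ → Fin (k+1) × V := fun i => (⟨min i k, by omega⟩, x (i % k)) with hg
    have hgval : ∀ i, ((g i).1 : ℕ) = min i k := fun i => rfl
    have hgsnd : ∀ i, (g i).2 = x (i % k) := fun i => rfl
    have hchain : ∀ i < k, H.Adj (g i) (g (i+1)) := by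
      intro i hi
      have hmi : min i k = i := by omega
      have hmi1 : min (i+1) k = i + 1 := by omega
      have e1 : i % k = i := Nat.mod_eq_of_lt hi
      refine (hAdjIff _ _).mpr ⟨?_, Or.inl ⟨?_, ?_, ?_, ?_⟩⟩
      · intro hfin
        have h1 : ((g i).1 : ℕ) = ((g (i+1)).1 : ℕ) := by rw [hfin]
        rw [hgval, hgval, hmi, hmi1] at h1
        omega
      · rw [hgval, hgval, hmi, hmi1]
      · rw [hgsnd, hgsnd, e1]
        rcases Nat.lt_or_ge (i+1) k with h | h
        · rw [Nat.mod_eq_of_lt h]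
          exact hadj i h
        · have hik : i + 1 = k := by omega
          rw [hik, Nat.mod_self, (by omega : i = k - 1)]
          exact hcyc
      · rw [hgsnd, hgval, hmi, e1]
        exact hcol i hi
      · rw [hgsnd, hgval, hmi1]
        rcases Nat.lt_or_ge (i+1) k with h | h
        · rw [Nat.mod_eq_of_lt h]
          exact hcol (i+1) h
        · have hik : i + 1 = k := by omega
          rw [hik, Nat.mod_self, hx0]
          exact hv
    obtain ⟨p, hp⟩ := walk_of_chain H g k (fun i hi => hchain i hi)
    have hg0 : g 0 = a := by
      refine Prod.ext ?_ ?_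
      · ext
        rw [hgval, hka]
        omega
      · show (g 0).2 = v
        rw [hgsnd, Nat.zero_mod, hx0]
    have hgk : g k = b := by
      refine Prod.ext ?_ ?_
      · ext
        rw [hgval, hkb]
        omega
      · show (g k).2 = v
        rw [hgsnd, Nat.mod_self, hx0]
    have upper : H.edist a b ≤ (k : ℕ∞) := by
      have h1 := SimpleGraph.edist_le (p.copy hg0 hgk)
      rwa [SimpleGraph.Walk.length_copy, hp] at h1
    exact le_antisymm upper lower
end

section
/- Let k ≥ 3, let G be a simple graph on a vertex type V with coloring c : V → Fin k, and let H be the layered graph of the k-cycle reduction: vertex set {0,…,k} × V, with (i,x) adjacent to (i+1,y) iff G.Adj x y, c(x) = i mod k and c(y) = (i+1) mod k. Let v : Fin N be an enumeration v₁,…,v_N (a bijection onto the set of vertices of color 0). For a stage 1 ≤ i ≤ N, let H_i be the graph with vertex set ({0,…,k} × V) ⊎ {s₁,…,s_N} ⊎ {t₁,…,t_N} whose edges are: all edges of H; path edges s_a ~ s_{a+1} and t_a ~ t_{a+1} for 1 ≤ a < N; and, for every 1 ≤ j ≤ i, the two edges s_{N+1−j} ~ (0, v_{N+1−j}) and (k,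 v_{N+1−j}) ~ t_{N+1−j}. Then: (a) the extended distance in H_i (valued in ℕ∞) between s₁ and t₁ is at least 2(N−i)+k+2; and (b) it equals 2(N−i)+k+2 if and only if there exist vertices x₀ = v_{N+1−i}, x₁, …, x_{k−1} of G with c(x_j) = j for every j, consecutive vertices adjacent in G, and x_{k−1} adjacent to x₀ — that is, if and only if G contains a k-cycle through v_{N+1−i} whose j-th vertex lies in color class j. -/
def kcRel {V : Type*} {k N : ℕ} (G : SimpleGraph V) (c : V → Fin k) (v : Fin N → V) (i : ℕ)
    (x y : (Fin (k + 1) × V) ⊕ (Fin N ⊕ Fin N)) : Prop :=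
  (∃ p q : Fin (k + 1) × V, x = Sum.inl p ∧ y = Sum.inl q ∧
      (q.1 : ℕ) = (p.1 : ℕ) + 1 ∧ G.Adj p.2 q.2 ∧
      ((c p.2 : ℕ) = (p.1 : ℕ) % k) ∧ ((c q.2 : ℕ) = (q.1 : ℕ) % k)) ∨
  (∃ a b : Fin N, x = Sum.inr (Sum.inl a) ∧ y = Sum.inr (Sum.inl b) ∧
      (b : ℕ) = (a : ℕ) + 1) ∨
  (∃ a b : Fin N, x = Sum.inr (Sum.inr a) ∧ y = Sum.inr (Sum.inr b) ∧
      (b : ℕ) = (a : ℕ) + 1) ∨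
  (∃ (j : ℕ) (a : Fin N), 1 ≤ j ∧ j ≤ i ∧ (a : ℕ) = N - j ∧
      x = Sum.inr (Sum.inl a) ∧ y = Sum.inl (⟨0, Nat.succ_pos k⟩, v a)) ∨
  (∃ (j : ℕ) (a : Fin N), 1 ≤ j ∧ j ≤ i ∧ (a : ℕ) = N - j ∧
      x = Sum.inl (⟨k, Nat.lt_succ_self k⟩, v a) ∧ y = Sum.inr (Sum.inr a))

section
variable {V : Type*} (k N M : ℕ)

def kcPhi : ((Fin (k + 1) × V) ⊕ (Fin N ⊕ Fin N)) → ℕ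
  | .inl (l, _) => M + 1 + (l : ℕ)
  | .inr (.inl a) => min (a : ℕ) M
  | .inr (.inr a) => M + k + 2 + (M - min (a : ℕ) M)

def kcExt (z0 : V) : ((Fin (k + 1) × V) ⊕ (Fin N ⊕ Fin N)) → V
  | .inl (_, z) => z
  | .inr _ => z0

lemma kcPhi_shapeS (u : (Fin (k + 1) × V) ⊕ (Fin N ⊕ Fin N)) (h : kcPhi k N M u ≤ M) :
    ∃ a : Fin N, u = .inr (.inl a) ∧ min (a : ℕ) M = kcPhi k N M u := by
  rcases u with ⟨l, z⟩ | (a | a) <;> simp only [kcPhi] at h ⊢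
  · omega
  · exact ⟨a, rfl, rfl⟩
  · omega

lemma kcPhi_shapeL (u : (Fin (k + 1) × V) ⊕ (Fin N ⊕ Fin N)) (h1 : M + 1 ≤ kcPhi k N M u)
    (h2 : kcPhi k N M u ≤ M + 1 + k) :
    ∃ (l : Fin (k + 1)) (z : V), u = .inl (l, z) ∧ (l : ℕ) + M + 1 = kcPhi k N M u := by
  rcases u with ⟨l, z⟩ | (a | a) <;> simp only [kcPhi] at h1 h2 ⊢
  · exact ⟨l, z, rfl, by omega⟩
  · omega
  · omega

lemma kcPhi_shapeT (u : (Fin (k + 1) × V) ⊕ (Fin N ⊕ Fin N)) (h : M + k + 2 ≤ kcPhi k N M u) :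
    ∃ a : Fin N, u = .inr (.inr a) ∧ kcPhi k N M u = M + k + 2 + (M - min (a : ℕ) M) := by
  rcases u with ⟨l, z⟩ | (a | a) <;> simp only [kcPhi] at h ⊢
  · exact absurd h (by have := l.isLt; omega)
  · omega
  · exact ⟨a, rfl, rfl⟩

lemma kcLip_getVert {W : Type*} {G : SimpleGraph W} (φ : W → ℕ)
    (hlip : ∀ x y, G.Adj x y → φ y ≤ φ x + 1) {u w : W} (p : G.Walk u w) :
    ∀ d m : ℕ, φ (p.getVert (m + d)) ≤ φ (p.getVert m) + d := by
  intro d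
  induction d with
  | zero => intro m; simp
  | succ d ih =>
    intro m
    have h1 : φ (p.getVert (m + d + 1)) ≤ φ (p.getVert (m + d)) + 1 := by
      by_cases h : m + d < p.length
      · exact hlip _ _ (p.adj_getVert_succ h)
      · rw [p.getVert_of_length_le (by omega), p.getVert_of_length_le (le_of_not_gt h)]
        omega
    have := ih m
    calc φ (p.getVert (m + (d + 1))) = φ (p.getVert (m + d + 1)) := by ring_nf
      _ ≤ φ (p.getVert (m + d)) + 1 := h1
      _ ≤ φ (p.getVert m) + (d + 1) := by omega

end

/-- Correctness of stage `i` of the reduction from `k`-Cycle to incremental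
`s`-`t` Shortest Paths: in the graph `H_i` consisting of the layered graph on
`{0,…,k} × V`, the source path `s₁,…,s_N`, the sink path `t₁,…,t_N`, and the
connection edges `s_{N+1−j} ~ (0, v_{N+1−j})` and `(k, v_{N+1−j}) ~ t_{N+1−j}`
for `1 ≤ j ≤ i`, the extended distance from `s₁` to `t₁` is at least
`2(N−i)+k+2`, with equality iff `G` contains a `k`-cycle through `v_{N+1−i}`
whose `j`-th vertex lies in color class `j`. -/
theorem kCycle_reduction_stage_distance {V : Type*} (k : ℕ) (hk : 3 ≤ k)
    (G : SimpleGraph V) (c : V → Fin k) (N : ℕ) (i : ℕ) (hi : 1 ≤ i) (hiN : i ≤ N)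
    (v : Fin N → V) (hvinj : Function.Injective v)
    (hvcol : ∀ a : Fin N, (c (v a) : ℕ) = 0)
    (hvsurj : ∀ x : V, (c x : ℕ) = 0 → ∃ a : Fin N, v a = x)
    (Hi : SimpleGraph ((Fin (k + 1) × V) ⊕ (Fin N ⊕ Fin N)))
    (hHi : Hi = SimpleGraph.fromRel (fun x y =>
      (∃ p q : Fin (k + 1) × V, x = Sum.inl p ∧ y = Sum.inl q ∧
          (q.1 : ℕ) = (p.1 : ℕ) + 1 ∧ G.Adj p.2 q.2 ∧
          ((c p.2 : ℕ) = (p.1 : ℕ) % k) ∧ ((c q.2 : ℕ) = (q.1 : ℕ) % k)) ∨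
      (∃ a b : Fin N, x = Sum.inr (Sum.inl a) ∧ y = Sum.inr (Sum.inl b) ∧
          (b : ℕ) = (a : ℕ) + 1) ∨
      (∃ a b : Fin N, x = Sum.inr (Sum.inr a) ∧ y = Sum.inr (Sum.inr b) ∧
          (b : ℕ) = (a : ℕ) + 1) ∨
      (∃ (j : ℕ) (a : Fin N), 1 ≤ j ∧ j ≤ i ∧ (a : ℕ) = N - j ∧
          x = Sum.inr (Sum.inl a) ∧ y = Sum.inl (⟨0, by omega⟩, v a)) ∨
      (∃ (j : ℕ) (a : Fin N), 1 ≤ j ∧ j ≤ i ∧ (a : ℕ) = N - j ∧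
          x = Sum.inl (⟨k, by omega⟩, v a) ∧ y = Sum.inr (Sum.inr a)))) :
    (((2 * (N - i) + k + 2 : ℕ) : ℕ∞) ≤
        Hi.edist (Sum.inr (Sum.inl ⟨0, by omega⟩)) (Sum.inr (Sum.inr ⟨0, by omega⟩))) ∧
      (Hi.edist (Sum.inr (Sum.inl ⟨0, by omega⟩)) (Sum.inr (Sum.inr ⟨0, by omega⟩)) =
          ((2 * (N - i) + k + 2 : ℕ) : ℕ∞) ↔
        ∃ x : ℕ → V, x 0 = v ⟨N - i, by omega⟩ ∧ (∀ j < k, (c (x j) : ℕ) = j) ∧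
          (∀ j, j + 1 < k → G.Adj (x j) (x (j + 1))) ∧ G.Adj (x (k - 1)) (x 0)) := by
  have hN : 0 < N := by omega
  have hMN : N - i < N := by omega
  generalize hgs : (Sum.inr (Sum.inl (⟨0, hN⟩ : Fin N)) :
    (Fin (k + 1) × V) ⊕ (Fin N ⊕ Fin N)) = s₁
  generalize hgt : (Sum.inr (Sum.inr (⟨0, hN⟩ : Fin N)) :
    (Fin (k + 1) × V) ⊕ (Fin N ⊕ Fin N)) = t₁
  generalize hgv : v ⟨N - i, hMN⟩ = v0
  set M : ℕ := N - i with hM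
  set L : ℕ := 2 * M + k + 2 with hL
  have hAdj : ∀ x y, Hi.Adj x y ↔ x ≠ y ∧ (kcRel G c v i x y ∨ kcRel G c v i y x) := by
    intro x y; rw [hHi]; exact SimpleGraph.fromRel_adj _ x y
  have hRlip : ∀ x y, kcRel G c v i x y → kcPhi k N M y ≤ kcPhi k N M x + 1 ∧
      kcPhi k N M x ≤ kcPhi k N M y + 1 := by
    intro x y h
    rcases h with ⟨p, q, rfl, rfl, h1, -, -, -⟩ | ⟨a, b, rfl, rfl, h1⟩ |
      ⟨a, b, rfl, rfl, h1⟩ | ⟨j, a, hj1, hj2, ha, rfl, rfl⟩ |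
      ⟨j, a, hj1, hj2, ha, rfl, rfl⟩ <;>
      simp only [kcPhi] <;> omega
  have hlip : ∀ x y, Hi.Adj x y → kcPhi k N M y ≤ kcPhi k N M x + 1 := by
    intro x y h
    rcases ((hAdj x y).1 h).2 with h | h
    · exact (hRlip x y h).1
    · exact (hRlip y x h).2
  have hφs : kcPhi k N M s₁ = 0 := by rw [← hgs]; simp [kcPhi]
  have hφt : kcPhi k N M t₁ = L := by rw [← hgt]; simp [kcPhi, hL]; omega
  -- Part (a): lower bound
  have hLB : ((L : ℕ) : ℕ∞) ≤ Hi.edist s₁ t₁ := by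
    by_cases hreach : Hi.Reachable s₁ t₁
    · obtain ⟨p, hp⟩ := hreach.exists_walk_length_eq_edist
      have h1 := kcLip_getVert (kcPhi k N M) hlip p p.length 0
      rw [Nat.zero_add, p.getVert_length, p.getVert_zero, hφs, hφt, Nat.zero_add] at h1
      rw [← hp]
      exact_mod_cast h1
    · rw [SimpleGraph.edist_eq_top_of_not_reachable hreach]; exact le_top
  refine ⟨hLB, ?_, ?_⟩
  · -- forward: equality implies cycle
    intro heq
    obtain ⟨p, hp⟩ := SimpleGraph.exists_walk_of_edist_eq_coe heq
    have hval : ∀ m, m ≤ L → kcPhi k N M (p.getVert m) = m := by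
      intro m hm
      have h1 := kcLip_getVert (kcPhi k N M) hlip p m 0
      rw [Nat.zero_add, p.getVert_zero, hφs, Nat.zero_add] at h1
      have h2 := kcLip_getVert (kcPhi k N M) hlip p (L - m) m
      rw [show m + (L - m) = p.length by rw [hp]; omega, p.getVert_length, hφt] at h2
      omega
    have hz : ∀ l : ℕ, (hl : l ≤ k) →
        ∃ z : V, p.getVert (M + 1 + l) = Sum.inl (⟨l, by omega⟩, z) := by
      intro l hl
      have h1 : kcPhi k N M (p.getVert (M + 1 + l)) = M + 1 + l := hval _ (by omega)
      obtain ⟨fl, z, hu, hv'⟩ := kcPhi_shapeL k N M (p.getVert (M + 1 + l)) (by omega) (by omega)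
      refine ⟨z, ?_⟩
      rw [hu]
      have : fl = ⟨l, by omega⟩ := Fin.ext (by simp only [Fin.val_mk]; omega)
      rw [this]
    obtain ⟨z0, hz0⟩ := hz 0 (by omega)
    set xx : ℕ → V := fun l => kcExt k N z0 (p.getVert (M + 1 + l)) with hxxdef
    have hxg : ∀ l : ℕ, (hl : l ≤ k) →
        p.getVert (M + 1 + l) = Sum.inl (⟨l, by omega⟩, xx l) := by
      intro l hl
      obtain ⟨z, hu⟩ := hz l hl
      have hxz : xx l = z := by
        show kcExt k N z0 (p.getVert (M + 1 + l)) = z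
        rw [hu]
        rfl
      rw [hu]
      exact congrArg (fun t => Sum.inl ((⟨l, by omega⟩ : Fin (k + 1)), t)) hxz.symm
    have hedge : ∀ l : ℕ, l < k → G.Adj (xx l) (xx (l + 1)) ∧
        ((c (xx l) : ℕ) = l % k) ∧ ((c (xx (l + 1)) : ℕ) = (l + 1) % k) := by
      intro l hl
      have ha : Hi.Adj (p.getVert (M + 1 + l)) (p.getVert (M + 1 + l + 1)) :=
        p.adj_getVert_succ (by rw [hp]; omega)
      have h11 := hxg (l + 1) hl
      rw [show M + 1 + (l + 1) = M + 1 + l + 1 by omega] at h11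
      rw [hxg l (le_of_lt hl), h11] at ha
      rcases ((hAdj _ _).1 ha).2 with h | h
      · rcases h with ⟨pp, qq, e1, e2, hh1, hh2, hh3, hh4⟩ | ⟨a1, b1, e1, e2, hh1⟩ |
          ⟨a1, b1, e1, e2, hh1⟩ | ⟨j1, a1, hj1, hj2, ha1, e1, e2⟩ |
          ⟨j1, a1, hj1, hj2, ha1, e1, e2⟩
        · obtain rfl := Sum.inl.inj e1
          obtain rfl := Sum.inl.inj e2
          exact ⟨hh2, by simpa using hh3, by simpa using hh4⟩
        · exact absurd e1 (by simp)
        · exact absurd e1 (by simp)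
        · exact absurd e1 (by simp)
        · exact absurd e2 (by simp)
      · rcases h with ⟨pp, qq, e1, e2, hh1, hh2, hh3, hh4⟩ | ⟨a1, b1, e1, e2, hh1⟩ |
          ⟨a1, b1, e1, e2, hh1⟩ | ⟨j1, a1, hj1, hj2, ha1, e1, e2⟩ |
          ⟨j1, a1, hj1, hj2, ha1, e1, e2⟩
        · obtain rfl := Sum.inl.inj e1
          obtain rfl := Sum.inl.inj e2
          exfalso
          simp only [Fin.val_mk] at hh1
          omega
        · exact absurd e1 (by simp)
        · exact absurd e1 (by simp)
        · exact absurd e1 (by simp)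
        · exact absurd e2 (by simp)
    have hsv : p.getVert M = Sum.inr (Sum.inl (⟨M, hMN⟩ : Fin N)) := by
      have h1 : kcPhi k N M (p.getVert M) = M := hval _ (by omega)
      obtain ⟨a, hu, hmin⟩ := kcPhi_shapeS k N M (p.getVert M) (by omega)
      rcases Nat.eq_zero_or_pos M with hM0 | hM0
      · have h2 : p.getVert M = s₁ := by rw [hM0]; exact p.getVert_zero
        rw [h2, ← hgs]
        exact congrArg (fun t => Sum.inr (Sum.inl t)) (Fin.ext (by simp only [Fin.val_mk]; omega))
      · have h1' : kcPhi k N M (p.getVert (M - 1)) = M - 1 := hval _ (by omega)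
        obtain ⟨a', hu', hmin'⟩ := kcPhi_shapeS k N M (p.getVert (M - 1)) (by omega)
        have ha' : (a' : ℕ) = M - 1 := by omega
        have hadj2 : Hi.Adj (p.getVert (M - 1)) (p.getVert M) := by
          have := p.adj_getVert_succ (i := M - 1) (by rw [hp]; omega)
          rwa [show M - 1 + 1 = M by omega] at this
        rw [hu', hu] at hadj2
        have haM : (a : ℕ) = M := by
          rcases ((hAdj _ _).1 hadj2).2 with h | h
          · rcases h with ⟨pp, qq, e1, e2, hh1, hh2, hh3, hh4⟩ | ⟨a1, b1, e1, e2, hh1⟩ |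
              ⟨a1, b1, e1, e2, hh1⟩ | ⟨j1, a1, hj1, hj2, ha1, e1, e2⟩ |
              ⟨j1, a1, hj1, hj2, ha1, e1, e2⟩
            · exact absurd e1 (by simp)
            · obtain rfl := Sum.inl.inj (Sum.inr.inj e1)
              obtain rfl := Sum.inl.inj (Sum.inr.inj e2)
              omega
            · exact absurd e1 (by simp)
            · exact absurd e2 (by simp)
            · exact absurd e1 (by simp)
          · rcases h with ⟨pp, qq, e1, e2, hh1, hh2, hh3, hh4⟩ | ⟨a1, b1, e1, e2, hh1⟩ |
              ⟨a1, b1, e1, e2, hh1⟩ | ⟨j1, a1, hj1, hj2, ha1, e1, e2⟩ |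
              ⟨j1, a1, hj1, hj2, ha1, e1, e2⟩
            · exact absurd e1 (by simp)
            · obtain rfl := Sum.inl.inj (Sum.inr.inj e1)
              obtain rfl := Sum.inl.inj (Sum.inr.inj e2)
              omega
            · exact absurd e1 (by simp)
            · exact absurd e2 (by simp)
            · exact absurd e1 (by simp)
        rw [hu]
        exact congrArg (fun t => Sum.inr (Sum.inl t)) (Fin.ext (by simpa using haM))
    have hx0v : xx 0 = v ⟨M, hMN⟩ := by
      have hadj3 : Hi.Adj (p.getVert M) (p.getVert (M + 1)) :=
        p.adj_getVert_succ (by rw [hp]; omega)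
      have h10 := hxg 0 (by omega)
      simp only [Nat.add_zero] at h10
      rw [hsv, h10] at hadj3
      rcases ((hAdj _ _).1 hadj3).2 with h | h
      · rcases h with ⟨pp, qq, e1, e2, hh1, hh2, hh3, hh4⟩ | ⟨a1, b1, e1, e2, hh1⟩ |
          ⟨a1, b1, e1, e2, hh1⟩ | ⟨j1, a1, hj1, hj2, ha1, e1, e2⟩ |
          ⟨j1, a1, hj1, hj2, ha1, e1, e2⟩
        · exact absurd e1 (by simp)
        · exact absurd e2 (by simp)
        · exact absurd e1 (by simp)
        · obtain rfl := Sum.inl.inj (Sum.inr.inj e1)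
          exact congrArg Prod.snd (Sum.inl.inj e2)
        · exact absurd e1 (by simp)
      · rcases h with ⟨pp, qq, e1, e2, hh1, hh2, hh3, hh4⟩ | ⟨a1, b1, e1, e2, hh1⟩ |
          ⟨a1, b1, e1, e2, hh1⟩ | ⟨j1, a1, hj1, hj2, ha1, e1, e2⟩ |
          ⟨j1, a1, hj1, hj2, ha1, e1, e2⟩
        · exact absurd e2 (by simp)
        · exact absurd e1 (by simp)
        · exact absurd e1 (by simp)
        · exact absurd e1 (by simp)
        · exact absurd e2 (by simp)
    have hel : p.getVert (M + k + 2) = Sum.inr (Sum.inr (⟨M, hMN⟩ : Fin N)) := by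
      have h1 : kcPhi k N M (p.getVert (M + k + 2)) = M + k + 2 := hval _ (by omega)
      obtain ⟨a, hu, hmin⟩ := kcPhi_shapeT k N M (p.getVert (M + k + 2)) (by omega)
      rcases Nat.eq_zero_or_pos M with hM0 | hM0
      · have h2 : p.getVert (M + k + 2) = t₁ := by
          rw [show M + k + 2 = p.length by rw [hp]; omega]
          exact p.getVert_length
        rw [h2, ← hgt]
        exact congrArg (fun t => Sum.inr (Sum.inr t)) (Fin.ext (by simp only [Fin.val_mk]; omega))
      · have h1' : kcPhi k N M (p.getVert (M + k + 3)) = M + k + 3 := hval _ (by omega)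
        obtain ⟨a', hu', hmin'⟩ := kcPhi_shapeT k N M (p.getVert (M + k + 3)) (by omega)
        have ha' : (a' : ℕ) = M - 1 := by omega
        have hadj2 : Hi.Adj (p.getVert (M + k + 2)) (p.getVert (M + k + 3)) := by
          have := p.adj_getVert_succ (i := M + k + 2) (by rw [hp]; omega)
          rwa [show M + k + 2 + 1 = M + k + 3 by omega] at this
        rw [hu, hu'] at hadj2
        have haM2 : (a : ℕ) = M := by
          rcases ((hAdj _ _).1 hadj2).2 with h | h
          · rcases h with ⟨pp, qq, e1, e2, hh1, hh2, hh3, hh4⟩ | ⟨a1, b1, e1, e2, hh1⟩ |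
              ⟨a1, b1, e1, e2, hh1⟩ | ⟨j1, a1, hj1, hj2, ha1, e1, e2⟩ |
              ⟨j1, a1, hj1, hj2, ha1, e1, e2⟩
            · exact absurd e1 (by simp)
            · exact absurd e1 (by simp)
            · obtain rfl := Sum.inr.inj (Sum.inr.inj e1)
              obtain rfl := Sum.inr.inj (Sum.inr.inj e2)
              omega
            · exact absurd e1 (by simp)
            · exact absurd e1 (by simp)
          · rcases h with ⟨pp, qq, e1, e2, hh1, hh2, hh3, hh4⟩ | ⟨a1, b1, e1, e2, hh1⟩ |
              ⟨a1, b1, e1, e2, hh1⟩ | ⟨j1, a1, hj1, hj2, ha1, e1, e2⟩ |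
              ⟨j1, a1, hj1, hj2, ha1, e1, e2⟩
            · exact absurd e1 (by simp)
            · exact absurd e1 (by simp)
            · obtain rfl := Sum.inr.inj (Sum.inr.inj e1)
              obtain rfl := Sum.inr.inj (Sum.inr.inj e2)
              omega
            · exact absurd e1 (by simp)
            · exact absurd e1 (by simp)
        rw [hu]
        exact congrArg (fun t => Sum.inr (Sum.inr t)) (Fin.ext (by simpa using haM2))
    have hxkv : xx k = v ⟨M, hMN⟩ := by
      have hadj4 : Hi.Adj (p.getVert (M + 1 + k)) (p.getVert (M + 1 + k + 1)) :=
        p.adj_getVert_succ (by rw [hp]; omega)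
      rw [show M + 1 + k + 1 = M + k + 2 by omega] at hadj4
      rw [hxg k le_rfl, hel] at hadj4
      rcases ((hAdj _ _).1 hadj4).2 with h | h
      · rcases h with ⟨pp, qq, e1, e2, hh1, hh2, hh3, hh4⟩ | ⟨a1, b1, e1, e2, hh1⟩ |
          ⟨a1, b1, e1, e2, hh1⟩ | ⟨j1, a1, hj1, hj2, ha1, e1, e2⟩ |
          ⟨j1, a1, hj1, hj2, ha1, e1, e2⟩
        · exact absurd e2 (by simp)
        · exact absurd e1 (by simp)
        · exact absurd e1 (by simp)
        · exact absurd e1 (by simp)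
        · obtain rfl := Sum.inr.inj (Sum.inr.inj e2)
          exact congrArg Prod.snd (Sum.inl.inj e1)
      · rcases h with ⟨pp, qq, e1, e2, hh1, hh2, hh3, hh4⟩ | ⟨a1, b1, e1, e2, hh1⟩ |
          ⟨a1, b1, e1, e2, hh1⟩ | ⟨j1, a1, hj1, hj2, ha1, e1, e2⟩ |
          ⟨j1, a1, hj1, hj2, ha1, e1, e2⟩
        · exact absurd e1 (by simp)
        · exact absurd e1 (by simp)
        · exact absurd e2 (by simp)
        · exact absurd e1 (by simp)
        · exact absurd e1 (by simp)
    refine ⟨xx, ?_, ?_, ?_, ?_⟩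
    · rw [hx0v, ← hgv]
      try exact congrArg v (Fin.ext (by simp only [Fin.val_mk]; omega))
    · intro j hj
      rw [(hedge j hj).2.1]
      exact Nat.mod_eq_of_lt hj
    · intro j hj
      exact (hedge j (by omega)).1
    · have h1 := (hedge (k - 1) (by omega)).1
      rw [show k - 1 + 1 = k by omega] at h1
      rwa [hxkv, ← hx0v] at h1
  · -- backward: cycle implies equality
    rintro ⟨x, hx0, hxcol, hxadj, hxlast⟩
    have hx0' : x 0 = v ⟨M, hMN⟩ := by
      rw [hx0, ← hgv]
      try exact congrArg v (Fin.ext (by simp only [Fin.val_mk]; omega))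
    have hchainS : ∀ d : ℕ, ∀ a b : Fin N, (b : ℕ) = (a : ℕ) + d →
        ∃ p : Hi.Walk (.inr (.inl a)) (.inr (.inl b)), p.length = d := by
      intro d
      induction d with
      | zero =>
        intro a b hb
        obtain rfl : a = b := Fin.ext (by omega)
        exact ⟨.nil, rfl⟩
      | succ d ih =>
        intro a b hb
        have hb' : (a : ℕ) + d < N := by have := b.isLt; omega
        obtain ⟨p, hp⟩ := ih a ⟨(a : ℕ) + d, hb'⟩ rfl
        have hadj : Hi.Adj (.inr (.inl ⟨(a : ℕ) + d, hb'⟩)) (.inr (.inl b)) := by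
          rw [hAdj]
          refine ⟨?_, Or.inl ?_⟩
          · intro hcon
            rw [Sum.inr.injEq, Sum.inl.injEq, Fin.ext_iff, Fin.val_mk] at hcon
            omega
          · exact Or.inr (Or.inl ⟨⟨(a : ℕ) + d, hb'⟩, b, rfl, rfl, by simp only [Fin.val_mk]; omega⟩)
        exact ⟨p.concat hadj, by rw [SimpleGraph.Walk.length_concat, hp]⟩
    have hchainT : ∀ d : ℕ, ∀ a b : Fin N, (b : ℕ) = (a : ℕ) + d →
        ∃ p : Hi.Walk (.inr (.inr a)) (.inr (.inr b)), p.length = d := by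
      intro d
      induction d with
      | zero =>
        intro a b hb
        obtain rfl : a = b := Fin.ext (by omega)
        exact ⟨.nil, rfl⟩
      | succ d ih =>
        intro a b hb
        have hb' : (a : ℕ) + d < N := by have := b.isLt; omega
        obtain ⟨p, hp⟩ := ih a ⟨(a : ℕ) + d, hb'⟩ rfl
        have hadj : Hi.Adj (.inr (.inr ⟨(a : ℕ) + d, hb'⟩)) (.inr (.inr b)) := by
          rw [hAdj]
          refine ⟨?_, Or.inl ?_⟩
          · intro hcon
            rw [Sum.inr.injEq, Sum.inr.injEq, Fin.ext_iff, Fin.val_mk] at hcon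
            omega
          · exact Or.inr (Or.inr (Or.inl ⟨⟨(a : ℕ) + d, hb'⟩, b, rfl, rfl, by simp only [Fin.val_mk]; omega⟩))
        exact ⟨p.concat hadj, by rw [SimpleGraph.Walk.length_concat, hp]⟩
    have hlayerW : ∀ l : ℕ, (hl : l ≤ k - 1) →
        ∃ p : Hi.Walk (.inl (⟨0, Nat.succ_pos k⟩, x 0)) (.inl (⟨l, by omega⟩, x l)),
          p.length = l := by
      intro l
      induction l with
      | zero => intro _; exact ⟨.nil, rfl⟩
      | succ l ih =>
        intro hl
        obtain ⟨p, hp⟩ := ih (by omega)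
        have hadj : Hi.Adj (.inl (⟨l, by omega⟩, x l)) (.inl (⟨l + 1, by omega⟩, x (l + 1))) := by
          rw [hAdj]
          refine ⟨?_, Or.inl ?_⟩
          · intro hcon
            rw [Sum.inl.injEq, Prod.mk.injEq, Fin.mk.injEq] at hcon
            omega
          · refine Or.inl ⟨(⟨l, by omega⟩, x l), (⟨l + 1, by omega⟩, x (l + 1)), rfl, rfl,
              by simp, hxadj l (by omega), ?_, ?_⟩
            · simp only []
              rw [hxcol l (by omega)]
              exact (Nat.mod_eq_of_lt (by omega)).symm
            · simp only []
              rw [hxcol (l + 1) (by omega)]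
              exact (Nat.mod_eq_of_lt (by omega)).symm
        exact ⟨p.concat hadj, by rw [SimpleGraph.Walk.length_concat, hp]⟩
    obtain ⟨pS, hpS⟩ := hchainS M ⟨0, hN⟩ ⟨M, hMN⟩ (by simp only [Fin.val_mk]; omega)
    obtain ⟨pT, hpT⟩ := hchainT M ⟨0, hN⟩ ⟨M, hMN⟩ (by simp only [Fin.val_mk]; omega)
    obtain ⟨pL, hpL⟩ := hlayerW (k - 1) le_rfl
    have e1 : Hi.Adj (.inr (.inl ⟨M, hMN⟩)) (.inl (⟨0, Nat.succ_pos k⟩, x 0)) := by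
      rw [hAdj]
      refine ⟨by simp, Or.inl ?_⟩
      refine Or.inr (Or.inr (Or.inr (Or.inl ⟨i, ⟨M, hMN⟩, hi, le_rfl, by simp [hM], rfl, ?_⟩)))
      rw [hx0']
    have e2 : Hi.Adj (.inl (⟨k - 1, by omega⟩, x (k - 1)))
        (.inl (⟨k, Nat.lt_succ_self k⟩, x 0)) := by
      rw [hAdj]
      refine ⟨?_, Or.inl ?_⟩
      · intro hcon
        rw [Sum.inl.injEq, Prod.mk.injEq, Fin.mk.injEq] at hcon
        omega
      · refine Or.inl ⟨(⟨k - 1, by omega⟩, x (k - 1)), (⟨k, Nat.lt_succ_self k⟩, x 0), rfl, rfl,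
          by simp only [Fin.val_mk]; omega, hxlast, ?_, ?_⟩
        · try simp only []
          rw [hxcol (k - 1) (by omega)]
          exact (Nat.mod_eq_of_lt (by omega)).symm
        · try simp only []
          rw [hx0', hvcol]
          show (0 : ℕ) = k % k
          exact (Nat.mod_self k).symm
    have e3 : Hi.Adj (.inl (⟨k, Nat.lt_succ_self k⟩, x 0)) (.inr (.inr ⟨M, hMN⟩)) := by
      rw [hAdj]
      refine ⟨by simp, Or.inl ?_⟩
      refine Or.inr (Or.inr (Or.inr (Or.inr ⟨i, ⟨M, hMN⟩, hi, le_rfl, by simp [hM], ?_, rfl⟩)))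
      rw [hx0']
    let W : Hi.Walk (Sum.inr (Sum.inl (⟨0, hN⟩ : Fin N))) (Sum.inr (Sum.inr (⟨0, hN⟩ : Fin N))) :=
      (((pS.concat e1).append ((pL.concat e2).concat e3)).append pT.reverse)
    have hWlen : W.length = L := by
      simp only [W, SimpleGraph.Walk.length_append, SimpleGraph.Walk.length_concat,
        SimpleGraph.Walk.length_reverse, hpS, hpT, hpL, hL]
      omega
    have hUB : Hi.edist s₁ t₁ ≤ ((L : ℕ) : ℕ∞) := by
      rw [← hgs, ← hgt]
      have := SimpleGraph.edist_le W
      rwa [hWlen] at this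
    exact le_antisymm hUB hLB
end

section
/- Let n ≥ 1, let A : Fin n → Fin n → Prop be a Boolean matrix, let U, V, W : {1,…,n} → Fin n → Prop be query vectors, and let 1 ≤ ℓ ≤ n be the index of the current query. Let G_ℓ be the query-gadget graph: vertex set {0,1,2,3} × Fin n × {0,1,…,n} (gadget index g, row i, column j), with edges (symmetric): path edges (g,i,j) ~ (g,i,j+1) for 1 ≤ j ≤ n−1; query edges (g,i,0) ~ (g,i,q) for 1 ≤ q ≤ ℓ whenever the corresponding query bit holds (U q i for g ∈ {0,3}, V q i for g = 1, W q i for g = 2); and cross edges (0,i,n) ~ (1,j,0) whenever A i j, (1,j,n) ~ (2,k,0) whenever A j k, and (2,k,n) ~ (3,i,0) whenever A k i. Then for every row i : Fin n: (a) the extended distance in G_ℓ (valued in ℕ∞, with ∞ for unreachable pairs) from (0,i,0) to (3,i,n) is at least 3 + 4(n+1−ℓ); and (b) it equals 3 + 4(n+1−ℓ) if and only if there exist j, k with U ℓ i, V ℓ j, W ℓ k, A i j, A j k and A k i. -/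
/-!
Give the vertex `(g, r, j)` the potential `(n + 2 - ℓ) g + min j 1 + (max j ℓ - ℓ)`. It changes
by at most one along every edge, is `0` at `(0, i, 0)` and `3 + 4 (n + 1 - ℓ)` at `(3, i, n)`,
which gives the lower bound. A walk attaining the bound raises the potential at every step, so it
enters each gadget through the query edge of query `ℓ`, climbs the row and leaves through a cross
edge; read backwards from `(3, i, n)`, the rows it visits in gadgets `1` and `2` close a triangle
through `i`. Conversely, a triangle `i, j, k` with the right query bits yields such a walk.
-/

namespace SimpleGraph

variable {V : Type*} {G : SimpleGraph V}

theorem edist_le_add_of_le {u v w : V} {a b : ℕ} (huv : G.edist u v ≤ a)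
    (hvw : G.edist v w ≤ b) : G.edist u w ≤ (a + b : ℕ) :=
  G.edist_triangle.trans (by push_cast; exact add_le_add huv hvw)

variable {f : V → ℕ}

theorem Walk.le_add_length_of_adj_le (hf : ∀ x y, G.Adj x y → f y ≤ f x + 1) {x y : V}
    (w : G.Walk x y) : f y ≤ f x + w.length := by
  induction w with
  | nil => simp
  | cons h _ ih => have := hf _ _ h; rw [length_cons]; omega

theorem sub_le_edist_of_adj_le (hf : ∀ x y, G.Adj x y → f y ≤ f x + 1) (x y : V) :
    ((f y - f x : ℕ) : ℕ∞) ≤ G.edist x y :=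
  le_iInf fun w => Nat.cast_le.2 (by have := w.le_add_length_of_adj_le hf; omega)

/-- Every step of such a walk raises `f` by exactly one. -/
theorem Walk.backward_induction_of_length_eq (hf : ∀ x y, G.Adj x y → f y ≤ f x + 1)
    (P : V → Prop) (hP : ∀ x y, G.Adj x y → f y = f x + 1 → P y → P x) {x y : V}
    (w : G.Walk x y) (hw : f y = f x + w.length) (hy : P y) : P x := by
  induction w with
  | nil => exact hy
  | cons h p ih =>
    rw [length_cons] at hw
    have hp := p.le_add_length_of_adj_le hf
    have hstep := hf _ _ h
    exact hP _ _ h (by omega) (ih (by omega) hy)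

end SimpleGraph

namespace OMv3Gadget

open SimpleGraph

variable {n : ℕ} (A : Fin n → Fin n → Prop) (U Vq Wq : ℕ → Fin n → Prop) (ℓ : ℕ)

abbrev Vertex (n : ℕ) := Fin 4 × Fin n × Fin (n + 1)

def QueryBit (q : ℕ) (g : Fin 4) (r : Fin n) : Prop :=
  (((g : ℕ) = 0 ∨ (g : ℕ) = 3) → U q r) ∧ ((g : ℕ) = 1 → Vq q r) ∧ ((g : ℕ) = 2 → Wq q r)

def GadgetRel (x y : Vertex n) : Prop :=
  (x.1 = y.1 ∧ x.2.1 = y.2.1 ∧ 1 ≤ (x.2.2 : ℕ) ∧ (y.2.2 : ℕ) = (x.2.2 : ℕ) + 1) ∨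
  (x.1 = y.1 ∧ x.2.1 = y.2.1 ∧ (x.2.2 : ℕ) = 0 ∧ 1 ≤ (y.2.2 : ℕ) ∧ (y.2.2 : ℕ) ≤ ℓ ∧
    QueryBit U Vq Wq y.2.2 x.1 x.2.1) ∨
  ((y.1 : ℕ) = (x.1 : ℕ) + 1 ∧ (x.2.2 : ℕ) = n ∧ (y.2.2 : ℕ) = 0 ∧ A x.2.1 y.2.1)

abbrev gadgetGraph : SimpleGraph (Vertex n) := fromRel (GadgetRel A U Vq Wq ℓ)

/-- Each gadget costs `n + 2 - ℓ` (a query edge to column `ℓ`, `n - ℓ` path edges, a cross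
edge), and column `j` costs the fewest edges needed to reach it from column `0`. -/
def potential (x : Vertex n) : ℕ :=
  (n + 2 - ℓ) * x.1 + min (x.2.2 : ℕ) 1 + (max (x.2.2 : ℕ) ℓ - ℓ)

def CrossStep (x y : Fin 4 × Fin n) : Prop :=
  (y.1 : ℕ) = x.1 + 1 ∧ A x.2 y.2 ∧ QueryBit U Vq Wq ℓ y.1 y.2

/-- What a walk from `x` to `(3, i, n)` raising the potential at every step forces: it leaves
column `0` by the query edge of query `ℓ`, and its cross edges chain the row of `x` to row `i`
of gadget `3`. -/
def CompletesTriangle (i : Fin n) (x : Vertex n) : Prop :=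
  ((x.2.2 : ℕ) = 0 ∨ ℓ ≤ x.2.2) ∧ ((x.2.2 : ℕ) = 0 → QueryBit U Vq Wq ℓ x.1 x.2.1) ∧
    Relation.ReflTransGen (CrossStep A U Vq Wq ℓ) (x.1, x.2.1) (3, i)

variable {A U Vq Wq ℓ}

theorem potential_le_of_rel (hℓn : ℓ ≤ n) {x y : Vertex n} (h : GadgetRel A U Vq Wq ℓ x y) :
    potential ℓ x ≤ potential ℓ y ∧ potential ℓ y ≤ potential ℓ x + 1 := by
  unfold potential
  rcases h with ⟨hg, -, h⟩ | ⟨hg, -, h⟩ | ⟨hg, h⟩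
  · rw [hg]; omega
  · rw [hg]; omega
  · have := x.2.1.pos
    rw [hg, Nat.mul_succ]; omega

theorem potential_le_of_adj (hℓn : ℓ ≤ n) {x y : Vertex n}
    (h : (gadgetGraph A U Vq Wq ℓ).Adj x y) : potential ℓ y ≤ potential ℓ x + 1 := by
  rcases h.2 with h | h
  exacts [(potential_le_of_rel hℓn h).2, ((potential_le_of_rel hℓn h).1).trans (by omega)]

theorem potential_start (i : Fin n) : potential ℓ ((0, i, 0) : Vertex n) = 0 := by
  simp [potential]

theorem potential_target (hℓn : ℓ ≤ n) (i : Fin n) :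
    potential ℓ ((3, i, Fin.last n) : Vertex n) = 3 + 4 * (n + 1 - ℓ) := by
  have := i.pos
  simp only [potential, Fin.isValue, Fin.coe_ofNat_eq_mod, Nat.mod_succ, Fin.val_last]
  omega

theorem le_edist_start_target (hℓn : ℓ ≤ n) (i : Fin n) :
    ((3 + 4 * (n + 1 - ℓ) : ℕ) : ℕ∞) ≤
      (gadgetGraph A U Vq Wq ℓ).edist (0, i, 0) (3, i, Fin.last n) := by
  have := sub_le_edist_of_adj_le (G := gadgetGraph A U Vq Wq ℓ)
    (fun _ _ => potential_le_of_adj hℓn) (0, i, 0) (3, i, Fin.last n)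
  rwa [potential_start, potential_target hℓn, Nat.sub_zero] at this

theorem CompletesTriangle.of_adj (hℓn : ℓ ≤ n) {i : Fin n} {x y : Vertex n}
    (h : (gadgetGraph A U Vq Wq ℓ).Adj x y) (hxy : potential ℓ y = potential ℓ x + 1)
    (hy : CompletesTriangle A U Vq Wq ℓ i y) : CompletesTriangle A U Vq Wq ℓ i x := by
  obtain ⟨hcol, hbit, hchain⟩ := hy
  have hrel : GadgetRel A U Vq Wq ℓ x y := h.2.resolve_right fun h' => by
    have := (potential_le_of_rel hℓn h').1; omega
  rcases hrel with ⟨hg, hr, h1, hsucc⟩ | ⟨hg, hr, h0, h1, hq, hq'⟩ | ⟨hg, hn, h0, hA⟩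
  · have : ℓ ≤ (x.2.2 : ℕ) := by unfold potential at hxy; rw [hg] at hxy; omega
    exact ⟨Or.inr this, by omega, hg ▸ hr ▸ hchain⟩
  · have hqℓ : (y.2.2 : ℕ) = ℓ := by omega
    exact ⟨Or.inl h0, fun _ => by rwa [hqℓ] at hq', hg ▸ hr ▸ hchain⟩
  · have := x.2.1.pos
    exact ⟨Or.inr (by omega), by omega, .head ⟨hg, hA, hbit h0⟩ hchain⟩

theorem exists_triangle_of_reflTransGen {i : Fin n}
    (h : Relation.ReflTransGen (CrossStep A U Vq Wq ℓ) (0, i) (3, i)) :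
    ∃ j k, U ℓ i ∧ Vq ℓ j ∧ Wq ℓ k ∧ A i j ∧ A j k ∧ A k i := by
  rcases h.cases_head with h0 | ⟨⟨g₁, j⟩, ⟨hg₁, hij, hj⟩, h⟩
  · simp at h0
  obtain rfl : g₁ = 1 := Fin.ext hg₁
  rcases h.cases_head with h0 | ⟨⟨g₂, k⟩, ⟨hg₂, hjk, hk⟩, h⟩
  · simp at h0
  obtain rfl : g₂ = 2 := Fin.ext hg₂
  rcases h.cases_head with h0 | ⟨⟨g₃, i'⟩, ⟨hg₃, hki', hi'⟩, h⟩
  · simp at h0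
  obtain rfl : g₃ = 3 := Fin.ext hg₃
  rcases h.cases_head with h0 | ⟨⟨g₄, _⟩, ⟨hg₄, -⟩, -⟩
  · obtain rfl : i' = i := (Prod.ext_iff.1 h0).2
    exact ⟨j, k, hi'.1 (Or.inr rfl), hj.2.1 rfl, hk.2.2 rfl, hij, hjk, hki'⟩
  · omega

theorem exists_triangle_of_edist_eq (hℓn : ℓ ≤ n) {i : Fin n}
    (h : (gadgetGraph A U Vq Wq ℓ).edist (0, i, 0) (3, i, Fin.last n) =
      ((3 + 4 * (n + 1 - ℓ) : ℕ) : ℕ∞)) :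
    ∃ j k, U ℓ i ∧ Vq ℓ j ∧ Wq ℓ k ∧ A i j ∧ A j k ∧ A k i := by
  obtain ⟨w, hw⟩ := exists_walk_of_edist_eq_coe h
  have htarget : CompletesTriangle A U Vq Wq ℓ i (3, i, Fin.last n) :=
    ⟨Or.inr hℓn, fun h0 => absurd h0 i.pos.ne', .refl⟩
  obtain ⟨-, -, hchain⟩ := w.backward_induction_of_length_eq
    (fun _ _ => potential_le_of_adj hℓn) _ (fun _ _ => CompletesTriangle.of_adj hℓn)
    (by rw [potential_start, potential_target hℓn, hw, zero_add]) htarget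
  exact exists_triangle_of_reflTransGen hchain

theorem adj_path (g : Fin 4) (r : Fin n) {m : Fin n} (hm : 1 ≤ (m : ℕ)) :
    (gadgetGraph A U Vq Wq ℓ).Adj (g, r, m.castSucc) (g, r, m.succ) :=
  ⟨by simp [Fin.ext_iff], Or.inl (Or.inl ⟨rfl, rfl, hm, rfl⟩)⟩

theorem adj_query (g : Fin 4) (r : Fin n) {q : Fin (n + 1)} (hq : 1 ≤ (q : ℕ))
    (hqℓ : (q : ℕ) ≤ ℓ) (h : QueryBit U Vq Wq q g r) :
    (gadgetGraph A U Vq Wq ℓ).Adj (g, r, 0) (g, r, q) :=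
  ⟨by simp [Fin.ext_iff]; omega, Or.inl (Or.inr (Or.inl ⟨rfl, rfl, rfl, hq, hqℓ, h⟩))⟩

theorem adj_cross {g g' : Fin 4} (hg : (g' : ℕ) = g + 1) {r r' : Fin n} (hA : A r r') :
    (gadgetGraph A U Vq Wq ℓ).Adj (g, r, Fin.last n) (g', r', 0) :=
  ⟨by simp [Fin.ext_iff]; omega, Or.inl (Or.inr (Or.inr ⟨hg, rfl, rfl, hA⟩))⟩

theorem edist_le_along_row (g : Fin 4) (r : Fin n) (m : Fin (n + 1)) (hm : 1 ≤ (m : ℕ)) :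
    (gadgetGraph A U Vq Wq ℓ).edist (g, r, m) (g, r, Fin.last n) ≤ (n - m : ℕ) := by
  induction m using Fin.reverseInduction with
  | last => simp
  | cast m ih =>
    have hstep := edist_le_add_of_le (edist_eq_one_iff_adj.2 (adj_path g r hm)).le
      (ih (by simp))
    exact hstep.trans (by simp only [Fin.val_succ, Fin.val_castSucc]; norm_cast; omega)

theorem edist_le_across_gadget (hℓ1 : 1 ≤ ℓ) (hℓn : ℓ ≤ n) {g : Fin 4} {r : Fin n}
    (h : QueryBit U Vq Wq ℓ g r) :
    (gadgetGraph A U Vq Wq ℓ).edist (g, r, 0) (g, r, Fin.last n) ≤ (n + 1 - ℓ : ℕ) := by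
  have hstep := edist_le_add_of_le (edist_eq_one_iff_adj.2
    (adj_query (A := A) g r (q := ⟨ℓ, by omega⟩) hℓ1 le_rfl h)).le
    (edist_le_along_row g r ⟨ℓ, by omega⟩ hℓ1)
  exact hstep.trans (Nat.cast_le.2 (by dsimp only; omega))

theorem edist_le_to_next_gadget (hℓ1 : 1 ≤ ℓ) (hℓn : ℓ ≤ n) {g g' : Fin 4}
    (hg : (g' : ℕ) = g + 1) {r r' : Fin n} (h : QueryBit U Vq Wq ℓ g r) (hA : A r r') :
    (gadgetGraph A U Vq Wq ℓ).edist (g, r, 0) (g', r', 0) ≤ (n + 2 - ℓ : ℕ) := by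
  have hstep := edist_le_add_of_le (edist_le_across_gadget hℓ1 hℓn h)
    (edist_eq_one_iff_adj.2 (adj_cross (U := U) (Vq := Vq) (Wq := Wq) (ℓ := ℓ) hg hA)).le
  exact hstep.trans (by norm_cast; omega)

theorem edist_le_of_triangle (hℓ1 : 1 ≤ ℓ) (hℓn : ℓ ≤ n) {i j k : Fin n} (hU : U ℓ i)
    (hV : Vq ℓ j) (hW : Wq ℓ k) (hij : A i j) (hjk : A j k) (hki : A k i) :
    (gadgetGraph A U Vq Wq ℓ).edist (0, i, 0) (3, i, Fin.last n) ≤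
      (3 + 4 * (n + 1 - ℓ) : ℕ) := by
  refine (edist_le_add_of_le
    (edist_le_to_next_gadget (g' := 1) hℓ1 hℓn rfl (by simp [QueryBit, hU]) hij) <|
    edist_le_add_of_le
    (edist_le_to_next_gadget (g' := 2) hℓ1 hℓn rfl (by simp [QueryBit, hV]) hjk) <|
    edist_le_add_of_le
    (edist_le_to_next_gadget (g' := 3) hℓ1 hℓn rfl (by simp [QueryBit, hW]) hki) <|
    edist_le_across_gadget hℓ1 hℓn (by simp [QueryBit, hU])).trans ?_
  norm_cast
  omega

end OMv3Gadget

/-- Claim 1 of the OMv3 reduction: in the query-gadget graph `G_ℓ` made of four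
chained gadgets (indices `0,1,2,3`, rows `Fin n`, columns `0,…,n`), with path
edges along columns `1,…,n` of each row, query edges `(g,i,0) ~ (g,i,q)` for
`1 ≤ q ≤ ℓ` whenever the corresponding query bit holds, and cross edges between
consecutive gadgets encoding `A`, the extended distance from `(0,i,0)` to
`(3,i,n)` is at least `3 + 4(n+1−ℓ)`, with equality iff there are `j, k` with
`U ℓ i ∧ V ℓ j ∧ W ℓ k ∧ A i j ∧ A j k ∧ A k i`. -/
theorem omv3_gadget_distance (n : ℕ) (A : Fin n → Fin n → Prop)
    (U Vq Wq : ℕ → Fin n → Prop) (ℓ : ℕ) (hℓ1 : 1 ≤ ℓ) (hℓn : ℓ ≤ n)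
    (Gℓ : SimpleGraph (Fin 4 × Fin n × Fin (n + 1)))
    (hG : Gℓ = SimpleGraph.fromRel (fun x y =>
      (x.1 = y.1 ∧ x.2.1 = y.2.1 ∧ 1 ≤ (x.2.2 : ℕ) ∧ (y.2.2 : ℕ) = (x.2.2 : ℕ) + 1) ∨
      (x.1 = y.1 ∧ x.2.1 = y.2.1 ∧ (x.2.2 : ℕ) = 0 ∧ 1 ≤ (y.2.2 : ℕ) ∧ (y.2.2 : ℕ) ≤ ℓ ∧
        (((x.1 : ℕ) = 0 ∨ (x.1 : ℕ) = 3) → U (y.2.2 : ℕ) x.2.1) ∧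
        ((x.1 : ℕ) = 1 → Vq (y.2.2 : ℕ) x.2.1) ∧
        ((x.1 : ℕ) = 2 → Wq (y.2.2 : ℕ) x.2.1)) ∨
      ((y.1 : ℕ) = (x.1 : ℕ) + 1 ∧ (x.2.2 : ℕ) = n ∧ (y.2.2 : ℕ) = 0 ∧ A x.2.1 y.2.1))) :
    ∀ i : Fin n,
      (((3 + 4 * (n + 1 - ℓ) : ℕ) : ℕ∞) ≤
          Gℓ.edist (⟨0, by omega⟩, i, ⟨0, by omega⟩) (⟨3, by omega⟩, i, ⟨n, by omega⟩)) ∧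
        (Gℓ.edist (⟨0, by omega⟩, i, ⟨0, by omega⟩) (⟨3, by omega⟩, i, ⟨n, by omega⟩) =
            ((3 + 4 * (n + 1 - ℓ) : ℕ) : ℕ∞) ↔
          ∃ j k : Fin n, U ℓ i ∧ Vq ℓ j ∧ Wq ℓ k ∧ A i j ∧ A j k ∧ A k i) := by
  obtain rfl : Gℓ = OMv3Gadget.gadgetGraph A U Vq Wq ℓ := hG
  intro i
  refine ⟨OMv3Gadget.le_edist_start_target hℓn i, OMv3Gadget.exists_triangle_of_edist_eq hℓn, ?_⟩
  rintro ⟨j, k, hU, hV, hW, hij, hjk, hki⟩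
  exact (OMv3Gadget.edist_le_of_triangle hℓ1 hℓn hU hV hW hij hjk hki).antisymm
    (OMv3Gadget.le_edist_start_target hℓn i)
end
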